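/- Fix ħ > 0, ε > 0 and an integer N ≥ 2, let 1 ≤ p < q ≤ N, and set V⁺(x) := log|x| for |x| ≥ 1 and V⁺(x) := 0 for |x| < 1. Then for every smooth compactly supported φ_N : (ℝ²)^N → ℂ one has ∫_{(ℝ²)^N} V⁺(x_p − x_q)² |φ_N(X_N)|² dX_N ≤ 2 ‖𝒦_N φ_N‖₂² + 2 ‖φ_N‖₂². -/

import Mathlib

open MeasureTheory Real Filter
open scoped BigOperators ENNReal NNReal

noncomputable section

/-- The plane `ℝ²`. -/
abbrev E2 := EuclideanSpace ℝ (Fin 2)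

/-- The `k`-th component of the vector potential `A(x) = (1/(2ε)) x^⊥`,
where `x^⊥ = (-x₂, x₁)`. -/
def Aco (ε : ℝ) (k : Fin 2) (x : E2) : ℝ :=
  if k = 0 then -(x 1) / (2 * ε) else (x 0) / (2 * ε)

/-- The magnetic momentum operator `-iℏ∂_{x_j^k} + Aᵏ(x_j)` acting on
`N`-body wave functions. -/
def PkN {N : ℕ} (ℏ ε : ℝ) (j : Fin N) (k : Fin 2)
    (φ : (Fin N → E2) → ℂ) (X : Fin N → E2) : ℂ :=
  -Complex.I * (ℏ : ℂ) * fderiv ℝ φ X (Pi.single j (EuclideanSpace.single k 1))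
    + (Aco ε k (X j) : ℂ) * φ X

/-- The `N`-body magnetic kinetic operator
`K_N = (1/2) ∑ⱼ ∑ₖ (-iℏ∂_{x_j^k} + Aᵏ(x_j))²`. -/
def KopN {N : ℕ} (ℏ ε : ℝ) (φ : (Fin N → E2) → ℂ) (X : Fin N → E2) : ℂ :=
  (1 / 2 : ℂ) * ∑ j : Fin N, ∑ k : Fin 2, PkN ℏ ε j k (PkN ℏ ε j k φ) X

/-- The confined `N`-body Hamiltonian `𝒦_N = K_N + (1/2) ∑ⱼ |x_j|²`. -/
def KKopN {N : ℕ} (ℏ ε : ℝ) (φ : (Fin N → E2) → ℂ) (X : Fin N → E2) : ℂ :=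
  KopN ℏ ε φ X + (1 / 2 : ℂ) * ((∑ j : Fin N, ‖X j‖ ^ 2 : ℝ) : ℂ) * φ X

/-- Squared `L²((ℝ²)^N)` norm. -/
def L2sqN {N : ℕ} (f : (Fin N → E2) → ℂ) : ℝ := ∫ X, ‖f X‖ ^ 2
/-- The positive part `V⁺` of `log|x|`. -/
def Vplus (x : E2) : ℝ := if 1 ≤ ‖x‖ then Real.log ‖x‖ else 0

namespace VplusAux

abbrev ΩN (N : ℕ) := Fin N → E2

instance haarN (N : ℕ) : (volume : Measure (ΩN N)).IsAddHaarMeasure :=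
  { toIsFiniteMeasureOnCompacts := inferInstance, toIsAddLeftInvariant := inferInstance,
    toIsOpenPosMeasure := inferInstance }

variable {N : ℕ}

/-- Smooth and compactly supported. -/
def CS (f : ΩN N → ℂ) : Prop := ContDiff ℝ (⊤ : ℕ∞) f ∧ HasCompactSupport f

lemma CS.integrable {f : ΩN N → ℂ} (hf : CS f) : Integrable f :=
  hf.1.continuous.integrable_of_hasCompactSupport hf.2

lemma CS.conj {f : ΩN N → ℂ} (hf : CS f) : CS (fun X => (starRingEnd ℂ) (f X)) :=
  ⟨Complex.conjCLE.toContinuousLinearMap.contDiff.comp hf.1,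
    hf.2.comp_left (g := starRingEnd ℂ) (map_zero _)⟩

lemma CS.smul {f g : ΩN N → ℂ} (hf : ContDiff ℝ (⊤ : ℕ∞) f) (hg : CS g) :
    CS (fun X => f X * g X) := ⟨hf.mul hg.1, hg.2.mul_left⟩

lemma CS.mul {f g : ΩN N → ℂ} (hf : CS f) (hg : CS g) :
    CS (fun X => f X * g X) := CS.smul hf.1 hg

lemma CS.const_mul {f : ΩN N → ℂ} (c : ℂ) (hf : CS f) :
    CS (fun X => c * f X) := CS.smul contDiff_const hf

lemma CS.add {f g : ΩN N → ℂ} (hf : CS f) (hg : CS g) :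
    CS (fun X => f X + g X) := ⟨hf.1.add hg.1, hf.2.add hg.2⟩

lemma CS.D {f : ΩN N → ℂ} (hf : CS f) (v : ΩN N) :
    CS (fun X => fderiv ℝ f X v) :=
  ⟨(hf.1.fderiv_right (by simp)).clm_apply contDiff_const, hf.2.fderiv_apply ℝ v⟩

lemma contDiff_Aco (ε : ℝ) (k : Fin 2) : ContDiff ℝ (⊤ : ℕ∞) (Aco ε k) := by
  unfold Aco
  rcases eq_or_ne k 0 with rfl | hk
  · simp only [if_pos rfl]
    exact ((EuclideanSpace.proj (1 : Fin 2) : E2 →L[ℝ] ℝ).contDiff.neg).div_const _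
  · simp only [if_neg hk]
    exact (EuclideanSpace.proj (0 : Fin 2) : E2 →L[ℝ] ℝ).contDiff.div_const _

lemma contDiff_A (ε : ℝ) (j : Fin N) (k : Fin 2) :
    ContDiff ℝ (⊤ : ℕ∞) (fun X : ΩN N => ((Aco ε k (X j) : ℝ) : ℂ)) :=
  Complex.ofRealCLM.contDiff.comp ((contDiff_Aco ε k).comp
    (ContinuousLinearMap.proj (R := ℝ) (φ := fun _ : Fin N => E2) j).contDiff)

lemma contDiff_PkN (ℏ ε : ℝ) (j : Fin N) (k : Fin 2) {f : ΩN N → ℂ}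
    (hf : ContDiff ℝ (⊤ : ℕ∞) f) : ContDiff ℝ (⊤ : ℕ∞) (PkN ℏ ε j k f) := by
  unfold PkN
  exact (contDiff_const.mul ((hf.fderiv_right (by simp)).clm_apply contDiff_const)).add
    ((contDiff_A ε j k).mul hf)

lemma PkN_support (ℏ ε : ℝ) (j : Fin N) (k : Fin 2) (f : ΩN N → ℂ) :
    Function.support (PkN ℏ ε j k f) ⊆ tsupport f := by
  rw [Function.support_subset_iff']
  intro x hx
  have hev : f =ᶠ[nhds x] 0 := by
    have hmem : (tsupport f)ᶜ ∈ nhds x := (isClosed_tsupport f).isOpen_compl.mem_nhds hx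
    filter_upwards [hmem] with y hy using image_eq_zero_of_notMem_tsupport hy
  have h0 : fderiv ℝ f x = 0 := by rw [hev.fderiv_eq]; exact fderiv_const_apply 0
  rw [PkN, h0, image_eq_zero_of_notMem_tsupport hx]
  simp

lemma CS.pk {f : ΩN N → ℂ} (ℏ ε : ℝ) (j : Fin N) (k : Fin 2) (hf : CS f) :
    CS (PkN ℏ ε j k f) :=
  ⟨contDiff_PkN ℏ ε j k hf.1, hf.2.mono' (PkN_support ℏ ε j k f)⟩

lemma conj_fderiv {f : ΩN N → ℂ} (X v : ΩN N) :
    fderiv ℝ (fun Y => (starRingEnd ℂ) (f Y)) X v = (starRingEnd ℂ) (fderiv ℝ f X v) := by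
  rw [show (fun Y => (starRingEnd ℂ) (f Y)) = (fun Y => star (f Y)) from rfl, fderiv_star]
  rfl

/-- Integration by parts: the magnetic momentum operator is symmetric. -/
lemma adjoint (ℏ ε : ℝ) (j : Fin N) (k : Fin 2) {f g : ΩN N → ℂ}
    (hf : CS f) (hg : CS g) :
    ∫ X, (starRingEnd ℂ) (f X) * PkN ℏ ε j k g X
      = ∫ X, (starRingEnd ℂ) (PkN ℏ ε j k f X) * g X := by
  set v : ΩN N := Pi.single j (EuclideanSpace.single k 1) with hv
  have hAsm : ContDiff ℝ (⊤ : ℕ∞) (fun X : ΩN N => ((Aco ε k (X j) : ℝ) : ℂ)) := contDiff_A ε j k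
  have hcf : CS (fun X => (starRingEnd ℂ) (f X)) := hf.conj
  have hDg : CS (fun X => fderiv ℝ g X v) := hg.D v
  have hDf : CS (fun X => fderiv ℝ f X v) := hf.D v
  have ibp : ∫ X, (starRingEnd ℂ) (f X) * fderiv ℝ g X v
      = - ∫ X, (starRingEnd ℂ) (fderiv ℝ f X v) * g X := by
    have h1 := integral_mul_fderiv_eq_neg_fderiv_mul_of_integrable
      (f := fun X => (starRingEnd ℂ) (f X)) (g := g) (v := v) (μ := volume)
      (by
        have : CS (fun X => fderiv ℝ (fun Y => (starRingEnd ℂ) (f Y)) X v * g X) :=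
          CS.mul (hcf.D v) hg
        exact this.integrable)
      (CS.mul hcf hDg).integrable (CS.mul hcf hg).integrable
      (fun x _ => hcf.1.differentiable (by simp) x) (fun x _ => hg.1.differentiable (by simp) x)
    rw [h1]
    congr 1
    congr 1
    funext X
    rw [conj_fderiv]
  have expandL : ∀ X, (starRingEnd ℂ) (f X) * PkN ℏ ε j k g X
      = (-Complex.I * (ℏ:ℂ)) * ((starRingEnd ℂ) (f X) * fderiv ℝ g X v)
        + ((Aco ε k (X j) : ℝ) : ℂ) * ((starRingEnd ℂ) (f X) * g X) := by
    intro X; rw [PkN]; ring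
  have expandR : ∀ X, (starRingEnd ℂ) (PkN ℏ ε j k f X) * g X
      = (Complex.I * (ℏ:ℂ)) * ((starRingEnd ℂ) (fderiv ℝ f X v) * g X)
        + ((Aco ε k (X j) : ℝ) : ℂ) * ((starRingEnd ℂ) (f X) * g X) := by
    intro X; rw [PkN]
    simp only [map_add, map_mul, map_neg, Complex.conj_I, Complex.conj_ofReal]
    ring
  simp only [expandL, expandR]
  rw [integral_add (CS.const_mul _ (CS.mul hcf hDg)).integrable
      (CS.smul hAsm (CS.mul hcf hg)).integrable,
    integral_add (CS.const_mul _ (CS.mul hDf.conj hg)).integrable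
      (CS.smul hAsm (CS.mul hcf hg)).integrable,
    integral_const_mul, integral_const_mul, ibp]
  ring

lemma pk_nonneg (ℏ ε : ℝ) (j : Fin N) (k : Fin 2) {φ : ΩN N → ℂ} (hφ : CS φ) :
    0 ≤ (∫ X, (starRingEnd ℂ) (φ X) * PkN ℏ ε j k (PkN ℏ ε j k φ) X).re := by
  rw [adjoint ℏ ε j k hφ (hφ.pk ℏ ε j k)]
  have h : ∀ X : ΩN N, (starRingEnd ℂ) (PkN ℏ ε j k φ X) * PkN ℏ ε j k φ X
      = ((‖PkN ℏ ε j k φ X‖ ^ 2 : ℝ) : ℂ) := by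
    intro X; rw [Complex.conj_mul']; push_cast; ring
  simp only [h]
  rw [show (∫ X : ΩN N, ((‖PkN ℏ ε j k φ X‖ ^ 2 : ℝ) : ℂ)) = ((∫ X : ΩN N, (‖PkN ℏ ε j k φ X‖ ^ 2 : ℝ) : ℝ) : ℂ) from integral_ofReal, Complex.ofReal_re]
  exact integral_nonneg fun X => sq_nonneg _

lemma CS.sum {ι : Type*} (s : Finset ι) (f : ι → ΩN N → ℂ)
    (h : ∀ i ∈ s, CS (f i)) : CS (fun X => ∑ i ∈ s, f i X) := by
  classical
  induction s using Finset.induction_on with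
  | empty =>
      refine ⟨by simpa using (contDiff_const (c := (0:ℂ))), ?_⟩
      simp only [Finset.sum_empty]
      exact HasCompactSupport.intro isCompact_empty (fun x _ => rfl)
  | @insert a s' hx ih =>
      simp only [Finset.sum_insert hx]
      exact (h a (Finset.mem_insert_self a s')).add
        (ih fun i hi => h i (Finset.mem_insert_of_mem hi))

lemma CS.kop (ℏ ε : ℝ) {φ : ΩN N → ℂ} (hφ : CS φ) : CS (KopN ℏ ε φ) := by
  have h : CS (fun X : ΩN N => ∑ j : Fin N, ∑ k : Fin 2, PkN ℏ ε j k (PkN ℏ ε j k φ) X) :=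
    CS.sum Finset.univ _ (fun j _ => CS.sum Finset.univ _
      (fun k _ => (hφ.pk ℏ ε j k).pk ℏ ε j k))
  exact CS.const_mul _ h

lemma contDiff_W : ContDiff ℝ (⊤ : ℕ∞) (fun X : ΩN N => (∑ j, ‖X j‖ ^ 2 : ℝ)) :=
  ContDiff.sum fun j _ => (contDiff_norm_sq ℝ).comp
    (ContinuousLinearMap.proj (R := ℝ) (φ := fun _ : Fin N => E2) j).contDiff

lemma CS.kk (ℏ ε : ℝ) {φ : ΩN N → ℂ} (hφ : CS φ) : CS (KKopN ℏ ε φ) := by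
  have h2 : CS (fun X : ΩN N => (1/2 : ℂ) * ((∑ j, ‖X j‖ ^ 2 : ℝ) : ℂ) * φ X) :=
    CS.smul (contDiff_const.mul (Complex.ofRealCLM.contDiff.comp contDiff_W)) hφ
  exact (hφ.kop ℏ ε).add h2

lemma kop_re_nonneg (ℏ ε : ℝ) {φ : ΩN N → ℂ} (hφ : CS φ) :
    0 ≤ (∫ X, (starRingEnd ℂ) (φ X) * KopN ℏ ε φ X).re := by
  have expand : ∀ X, (starRingEnd ℂ) (φ X) * KopN ℏ ε φ X
      = (1/2 : ℂ) * ∑ j : Fin N, ∑ k : Fin 2,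
          (starRingEnd ℂ) (φ X) * PkN ℏ ε j k (PkN ℏ ε j k φ) X := by
    intro X
    rw [KopN, mul_left_comm]
    congr 1
    rw [Finset.mul_sum]
    exact Finset.sum_congr rfl fun j _ => Finset.mul_sum _ _ _
  simp only [expand]
  rw [integral_const_mul]
  rw [integral_finset_sum _ fun j _ => integrable_finset_sum _ fun k _ =>
      (hφ.conj.mul ((hφ.pk ℏ ε j k).pk ℏ ε j k)).integrable]
  have h2 : (∑ j : Fin N, ∫ X, ∑ k : Fin 2,
        (starRingEnd ℂ) (φ X) * PkN ℏ ε j k (PkN ℏ ε j k φ) X)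
      = ∑ j : Fin N, ∑ k : Fin 2,
        ∫ X, (starRingEnd ℂ) (φ X) * PkN ℏ ε j k (PkN ℏ ε j k φ) X :=
    Finset.sum_congr rfl fun j _ => integral_finset_sum _ fun k _ =>
      (hφ.conj.mul ((hφ.pk ℏ ε j k).pk ℏ ε j k)).integrable
  rw [h2, show (1/2 : ℂ) = ((1/2 : ℝ) : ℂ) by norm_num, Complex.re_ofReal_mul,
    Complex.re_sum]
  refine mul_nonneg (by norm_num) (Finset.sum_nonneg fun j _ => ?_)
  rw [Complex.re_sum]
  exact Finset.sum_nonneg fun k _ => pk_nonneg ℏ ε j k hφ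

end VplusAux

open VplusAux in
/-- Step 1 of Lemma 6.9: bound for one pair interaction. -/
theorem Vplus_pair_bound (ℏ ε : ℝ) (hℏ : 0 < ℏ) (hε : 0 < ε)
    (N : ℕ) (hN : 2 ≤ N) (p q : Fin N) (hpq : p < q)
    (φ : (Fin N → E2) → ℂ) (hφ : ContDiff ℝ (⊤ : ℕ∞) φ) (hsupp : HasCompactSupport φ) :
    (∫ X : Fin N → E2, (Vplus (X p - X q)) ^ 2 * ‖φ X‖ ^ 2)
      ≤ 2 * L2sqN (KKopN ℏ ε φ) + 2 * L2sqN φ := by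
  classical
  have hCS : CS φ := ⟨hφ, hsupp⟩
  set W : (Fin N → E2) → ℝ := fun X => ∑ j, ‖X j‖ ^ 2 with hWdef
  have hWsm : ContDiff ℝ (⊤ : ℕ∞) W := contDiff_W
  have hKK : CS (KKopN ℏ ε φ) := hCS.kk ℏ ε
  have hKop : CS (KopN ℏ ε φ) := hCS.kop ℏ ε
  have hnφsq : HasCompactSupport (fun X : Fin N → E2 => ‖φ X‖ ^ 2) :=
    hsupp.comp_left (g := fun z : ℂ => ‖z‖ ^ 2) (by simp)
  have hWφ_int : Integrable (fun X : Fin N → E2 => W X * ‖φ X‖ ^ 2) :=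
    (hWsm.continuous.mul ((hφ.continuous.norm.pow 2))).integrable_of_hasCompactSupport
      hnφsq.mul_left
  have hsplit : (∫ X, (starRingEnd ℂ) (φ X) * KKopN ℏ ε φ X).re
      = (∫ X, (starRingEnd ℂ) (φ X) * KopN ℏ ε φ X).re
        + (1/2) * ∫ X, W X * ‖φ X‖ ^ 2 := by
    have e : ∀ X : Fin N → E2, (starRingEnd ℂ) (φ X) * KKopN ℏ ε φ X
        = (starRingEnd ℂ) (φ X) * KopN ℏ ε φ X
          + ((1/2 * (W X * ‖φ X‖ ^ 2) : ℝ) : ℂ) := by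
      intro X
      rw [KKopN, mul_add]
      congr 1
      rw [show (starRingEnd ℂ) (φ X) * ((1/2 : ℂ) * ((W X : ℝ) : ℂ) * φ X)
          = (1/2 : ℂ) * ((W X : ℝ) : ℂ) * ((starRingEnd ℂ) (φ X) * φ X) by ring,
        Complex.conj_mul']
      push_cast
      ring
    have hir : Integrable (fun X : Fin N → E2 => ((1/2 * (W X * ‖φ X‖ ^ 2) : ℝ) : ℂ)) := by
      refine (Complex.continuous_ofReal.comp
        (continuous_const.mul (hWsm.continuous.mul (hφ.continuous.norm.pow 2)))).integrable_of_hasCompactSupport ?_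
      exact (hnφsq.mul_left.mul_left).comp_left (g := fun t : ℝ => (t : ℂ)) (by simp)
    simp only [e]
    rw [integral_add (hCS.conj.mul hKop).integrable hir, Complex.add_re,
      show (∫ X : Fin N → E2, ((1/2 * (W X * ‖φ X‖ ^ 2) : ℝ) : ℂ))
        = ((∫ X : Fin N → E2, (1/2 * (W X * ‖φ X‖ ^ 2) : ℝ) : ℝ) : ℂ) from integral_ofReal,
      Complex.ofReal_re, integral_const_mul]
  have hKnn := kop_re_nonneg ℏ ε hCS
  have hpt : ∀ X : Fin N → E2, Vplus (X p - X q) ^ 2 * ‖φ X‖ ^ 2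
      ≤ 2 * (W X * ‖φ X‖ ^ 2) := by
    intro X
    have hV : Vplus (X p - X q) ^ 2 ≤ 2 * W X := by
      have h1 : Vplus (X p - X q) ^ 2 ≤ ‖X p - X q‖ ^ 2 := by
        rw [Vplus]; split_ifs with h
        · have h0 : 0 ≤ Real.log ‖X p - X q‖ := Real.log_nonneg h
          have h2 : Real.log ‖X p - X q‖ ≤ ‖X p - X q‖ :=
            (Real.log_le_sub_one_of_pos (by linarith)).trans (by linarith)
          nlinarith
        · simpa using sq_nonneg ‖X p - X q‖
      have h3 : ∑ j ∈ ({p, q} : Finset (Fin N)), ‖X j‖ ^ 2 ≤ W X :=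
        Finset.sum_le_sum_of_subset_of_nonneg (Finset.subset_univ _)
          (fun i _ _ => sq_nonneg _)
      rw [Finset.sum_pair hpq.ne] at h3
      have h4 := norm_sub_le (X p) (X q)
      nlinarith [norm_nonneg (X p - X q), sq_nonneg (‖X p‖ - ‖X q‖)]
    nlinarith [sq_nonneg ‖φ X‖]
  have hstep1 : (∫ X : Fin N → E2, Vplus (X p - X q) ^ 2 * ‖φ X‖ ^ 2)
      ≤ ∫ X : Fin N → E2, 2 * (W X * ‖φ X‖ ^ 2) := by
    refine integral_mono_of_nonneg (Eventually.of_forall fun X => ?_)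
      (hWφ_int.const_mul 2) (Eventually.of_forall hpt)
    exact mul_nonneg (sq_nonneg _) (sq_nonneg _)
  have hnKK_int : Integrable (fun X : Fin N → E2 => ‖KKopN ℏ ε φ X‖ ^ 2) :=
    (hKK.1.continuous.norm.pow 2).integrable_of_hasCompactSupport
      (hKK.2.comp_left (g := fun z : ℂ => ‖z‖ ^ 2) (by simp) : HasCompactSupport ((fun z : ℂ => ‖z‖ ^ 2) ∘ KKopN ℏ ε φ))
  have hnφ_int : Integrable (fun X : Fin N → E2 => ‖φ X‖ ^ 2) :=
    (hφ.continuous.norm.pow 2).integrable_of_hasCompactSupport hnφsq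
  have hprod_int : Integrable (fun X : Fin N → E2 => ‖φ X‖ * ‖KKopN ℏ ε φ X‖) :=
    (hφ.continuous.norm.mul hKK.1.continuous.norm).integrable_of_hasCompactSupport
      (HasCompactSupport.mul_left (hKK.2.comp_left (g := fun z : ℂ => ‖z‖) (by simp)))
  have hcs1 : (∫ X, (starRingEnd ℂ) (φ X) * KKopN ℏ ε φ X).re
      ≤ ∫ X : Fin N → E2, ‖φ X‖ * ‖KKopN ℏ ε φ X‖ := by
    calc (∫ X, (starRingEnd ℂ) (φ X) * KKopN ℏ ε φ X).re
        ≤ ‖∫ X, (starRingEnd ℂ) (φ X) * KKopN ℏ ε φ X‖ := Complex.re_le_norm _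
      _ ≤ ∫ X, ‖(starRingEnd ℂ) (φ X) * KKopN ℏ ε φ X‖ := norm_integral_le_integral_norm _
      _ = ∫ X : Fin N → E2, ‖φ X‖ * ‖KKopN ℏ ε φ X‖ := by
          congr 1; funext X; rw [norm_mul]; simp
  have hamgm : (∫ X : Fin N → E2, 2 * (‖φ X‖ * ‖KKopN ℏ ε φ X‖))
      ≤ (∫ X : Fin N → E2, ‖φ X‖ ^ 2) + ∫ X : Fin N → E2, ‖KKopN ℏ ε φ X‖ ^ 2 := by
    rw [← integral_add hnφ_int hnKK_int]
    refine integral_mono (hprod_int.const_mul 2) (hnφ_int.add hnKK_int) fun X => ?_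
    have h5 := two_mul_le_add_sq ‖φ X‖ ‖KKopN ℏ ε φ X‖
    linarith
  have e2 : (∫ X : Fin N → E2, 2 * (W X * ‖φ X‖ ^ 2))
      = 2 * ∫ X : Fin N → E2, W X * ‖φ X‖ ^ 2 := integral_const_mul 2 _
  have e3 : (∫ X : Fin N → E2, 2 * (‖φ X‖ * ‖KKopN ℏ ε φ X‖))
      = 2 * ∫ X : Fin N → E2, ‖φ X‖ * ‖KKopN ℏ ε φ X‖ := integral_const_mul 2 _
  have eL1 : L2sqN (KKopN ℏ ε φ) = ∫ X : Fin N → E2, ‖KKopN ℏ ε φ X‖ ^ 2 := rfl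
  have eL2 : L2sqN φ = ∫ X : Fin N → E2, ‖φ X‖ ^ 2 := rfl
  linarith
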